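/- For β ∈ ℝ with |β| ≥ 1/2 and r > 0, the modified Bessel function of the second kind satisfies √(π/2) r^{-1/2} e^{-r} ≤ K_β(r) ≤ √(2π) r^{-1/2} e^{-r} e^{β²/(2r)}. -/

import Mathlib

/-!
Upper bound: since `cosh t ≥ 1 + t²/2`, completing the square in `-r (1 + t²/2) + βt` dominates
the integrand by `e^{-r + β²/(2r)}` times a Gaussian of variance `1/r` centred at `β/r`.

Lower bound: the weight `e^{-r cosh t}` is even, so `e^{βt}` may be replaced by
`cosh (βt) ≥ cosh (t/2)`; writing `cosh t = 1 + 2 sinh² (t/2)`, the substitution `u = sinh (t/2)`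
turns the minorant into the Gaussian integral `2 e^{-r} ∫ e^{-2ru²} du = 2 e^{-r} √(π/(2r))`.
-/

open Filter Real

noncomputable section

/-- The modified Bessel function of the second kind,
`K_β(r) = (1/2) ∫_ℝ e^{-r cosh t} e^{βt} dt`. -/
def besselK (β r : ℝ) : ℝ :=
  (1 / 2) * ∫ t : ℝ, Real.exp (-r * Real.cosh t) * Real.exp (β * t)

open MeasureTheory

namespace Real

theorem cosh_eq_one_add_two_mul_sinh_half_sq (t : ℝ) : cosh t = 1 + 2 * sinh (t / 2) ^ 2 := by
  have h := cosh_two_mul (t / 2)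
  rw [mul_div_cancel₀ t two_ne_zero, cosh_sq] at h
  linarith

theorem one_add_sq_div_two_le_cosh (t : ℝ) : 1 + t ^ 2 / 2 ≤ cosh t := by
  have h : (t / 2) ^ 2 ≤ sinh (t / 2) ^ 2 := by
    rw [sq_le_sq, abs_sinh]
    exact self_le_sinh_iff.mpr (abs_nonneg _)
  rw [cosh_eq_one_add_two_mul_sinh_half_sq]
  linarith

theorem integral_cosh_mul_comp_sinh (g : ℝ → ℝ) : ∫ t, cosh t * g (sinh t) = ∫ u, g u := by
  have h := integral_image_eq_integral_abs_deriv_smul MeasurableSet.univ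
    (fun t _ => (hasDerivAt_sinh t).hasDerivWithinAt) sinh_injective.injOn g
  rw [Set.image_univ, sinh_surjective.range_eq, Measure.restrict_univ] at h
  simp_rw [h, smul_eq_mul, abs_of_pos (cosh_pos _)]

theorem integral_cosh_half_mul_exp_neg_mul_sinh_half_sq (c : ℝ) :
    ∫ t, cosh (t / 2) * exp (-c * sinh (t / 2) ^ 2) = 2 * √(π / c) := by
  rw [Measure.integral_comp_div (fun t => cosh t * exp (-c * sinh t ^ 2)),
    integral_cosh_mul_comp_sinh (fun u => exp (-c * u ^ 2)), integral_gaussian, abs_two,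
    smul_eq_mul]

end Real

theorem integral_mul_exp_eq_integral_mul_cosh {f : ℝ → ℝ} (hf : Function.Even f) {β : ℝ}
    (hint : Integrable fun t => f t * exp (β * t)) :
    ∫ t, f t * exp (β * t) = ∫ t, f t * cosh (β * t) := by
  have hneg : (fun t => f t * exp (-β * t)) = fun t => f (-t) * exp (β * -t) := by
    ext t; rw [hf, neg_mul, mul_neg]
  have hint' : Integrable fun t => f t * exp (-β * t) := hneg ▸ hint.comp_neg
  have hflip : ∫ t, f t * exp (-β * t) = ∫ t, f t * exp (β * t) := by
    rw [hneg, integral_neg_eq_self (fun t => f t * exp (β * t))]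
  simp_rw [cosh_eq, ← neg_mul, mul_div, mul_add]
  rw [integral_div, integral_add hint hint', hflip]
  ring

section Bessel

variable {r : ℝ}

theorem exp_neg_mul_cosh_mul_exp_le (hr : 0 < r) (β t : ℝ) :
    exp (-r * cosh t) * exp (β * t) ≤
      exp (-r) * exp (β ^ 2 / (2 * r)) * exp (-(r / 2) * (t - β / r) ^ 2) := by
  simp_rw [← exp_add, exp_le_exp]
  have hsq : -r + β ^ 2 / (2 * r) + -(r / 2) * (t - β / r) ^ 2 = -r * (1 + t ^ 2 / 2) + β * t := by
    field_simp; ring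
  rw [hsq]
  nlinarith [one_add_sq_div_two_le_cosh t]

theorem integrable_exp_neg_mul_cosh_mul_exp (hr : 0 < r) (β : ℝ) :
    Integrable fun t => exp (-r * cosh t) * exp (β * t) := by
  refine (((integrable_exp_neg_mul_sq (half_pos hr)).comp_sub_right (β / r)).const_mul
    (exp (-r) * exp (β ^ 2 / (2 * r)))).mono' (by fun_prop) (ae_of_all _ fun t => ?_)
  rw [norm_of_nonneg (by positivity)]
  exact exp_neg_mul_cosh_mul_exp_le hr β t

theorem besselK_eq_half_integral_mul_cosh (hr : 0 < r) (β : ℝ) :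
    besselK β r = (1 / 2) * ∫ t, exp (-r * cosh t) * cosh (β * t) := by
  rw [besselK, integral_mul_exp_eq_integral_mul_cosh (fun t => by rw [cosh_neg])
    (integrable_exp_neg_mul_cosh_mul_exp hr β)]

theorem besselK_le (hr : 0 < r) (β : ℝ) :
    besselK β r ≤ √(π / (2 * r)) * exp (-r) * exp (β ^ 2 / (2 * r)) := by
  have hgauss : ∫ t, exp (-(r / 2) * (t - β / r) ^ 2) = 2 * √(π / (2 * r)) := by
    rw [integral_sub_right_eq_self (fun t => exp (-(r / 2) * t ^ 2)), integral_gaussian,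
      show π / (r / 2) = 2 ^ 2 * (π / (2 * r)) by field_simp, sqrt_mul (by positivity),
      sqrt_sq zero_le_two]
  have hmono := integral_mono (integrable_exp_neg_mul_cosh_mul_exp hr β)
    (((integrable_exp_neg_mul_sq (half_pos hr)).comp_sub_right (β / r)).const_mul
      (exp (-r) * exp (β ^ 2 / (2 * r)))) (exp_neg_mul_cosh_mul_exp_le hr β)
  rw [integral_const_mul, hgauss] at hmono
  rw [besselK]
  linarith

theorem exp_neg_mul_cosh_half_mul_le {β : ℝ} (hβ : 1 / 2 ≤ |β|) (t : ℝ) :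
    exp (-r) * (cosh (t / 2) * exp (-(2 * r) * sinh (t / 2) ^ 2)) ≤
      exp (-r * cosh t) * cosh (β * t) := by
  have hcosh : cosh (t / 2) ≤ cosh (β * t) := by
    rw [cosh_le_cosh, abs_mul, abs_div, abs_two, div_eq_inv_mul]
    exact mul_le_mul_of_nonneg_right (by linarith) (abs_nonneg t)
  have hexp : exp (-r) * exp (-(2 * r) * sinh (t / 2) ^ 2) = exp (-r * cosh t) := by
    rw [← exp_add, cosh_eq_one_add_two_mul_sinh_half_sq]
    ring_nf
  calc exp (-r) * (cosh (t / 2) * exp (-(2 * r) * sinh (t / 2) ^ 2))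
      = exp (-r * cosh t) * cosh (t / 2) := by rw [← hexp]; ring
    _ ≤ exp (-r * cosh t) * cosh (β * t) := by gcongr

theorem le_besselK (hr : 0 < r) {β : ℝ} (hβ : 1 / 2 ≤ |β|) :
    √(π / (2 * r)) * exp (-r) ≤ besselK β r := by
  have hint : Integrable fun t => exp (-r * cosh t) * cosh (β * t) := by
    refine (((integrable_exp_neg_mul_cosh_mul_exp hr β).add
      (integrable_exp_neg_mul_cosh_mul_exp hr (-β))).div_const 2).congr (ae_of_all _ fun t => ?_)
    simp only [Pi.add_apply, cosh_eq (β * t), neg_mul]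
    ring
  have hmono := integral_mono_of_nonneg (ae_of_all _ fun t => by positivity) hint
    (ae_of_all _ (exp_neg_mul_cosh_half_mul_le hβ))
  rw [integral_const_mul, integral_cosh_half_mul_exp_neg_mul_sinh_half_sq] at hmono
  rw [besselK_eq_half_integral_mul_cosh hr]
  linarith

end Bessel

/-- Two-sided bound for the modified Bessel function of the second kind: for `|β| ≥ 1/2`
and `r > 0`, `√(π/2) r^{-1/2} e^{-r} ≤ K_β(r) ≤ √(2π) r^{-1/2} e^{-r} e^{β²/(2r)}`. -/
theorem stmt18 (β r : ℝ) (hβ : 1 / 2 ≤ |β|) (hr : 0 < r) :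
    Real.sqrt (π / 2) * r ^ (-(1 : ℝ) / 2) * Real.exp (-r) ≤ besselK β r ∧
    besselK β r ≤
      Real.sqrt (2 * π) * r ^ (-(1 : ℝ) / 2) * Real.exp (-r) * Real.exp (β ^ 2 / (2 * r)) := by
  have hrpow : r ^ (-(1 : ℝ) / 2) = (√r)⁻¹ := by
    rw [neg_div, rpow_neg hr.le, sqrt_eq_rpow]
  have hlow : √(π / 2) * r ^ (-(1 : ℝ) / 2) = √(π / (2 * r)) := by
    rw [hrpow, ← div_eq_mul_inv, ← sqrt_div' _ hr.le, div_div]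
  have hup : √(2 * π) * r ^ (-(1 : ℝ) / 2) = 2 * √(π / (2 * r)) := by
    rw [hrpow, ← div_eq_mul_inv, ← sqrt_div' _ hr.le,
      show 2 * π / r = 2 ^ 2 * (π / (2 * r)) by field_simp, sqrt_mul (by positivity),
      sqrt_sq zero_le_two]
  refine ⟨hlow ▸ le_besselK hr hβ, (besselK_le hr β).trans ?_⟩
  rw [hup]
  have : 0 ≤ √(π / (2 * r)) * exp (-r) * exp (β ^ 2 / (2 * r)) := by positivity
  linarith

end
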